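/- The class (V_L)_DI of directly indecomposable members of V_L is not axiomatizable by any set of first-order sentences. -/

import Mathlib

/-!
For `n` with `2n + 7` prime, the two-row algebra `Gadget (Fin (n + 1)) (Option (Fin (n + 1)))`
is a model of `TL` of prime cardinality, hence directly indecomposable. In a nonprincipal
ultraproduct of these algebras the two rows become equinumerous infinite sets (`Option A ≃ A`),
and a gadget with equinumerous rows splits as `Bool × Option (Option A)`. By Łoś's theorem the
ultraproduct would nevertheless satisfy any axiomatization of the directly indecomposable models.
-/

open FirstOrder Language

universe u v w

namespace Paper

/-- The direct product of two `L`-structures, with pointwise operations. -/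
instance prodStructure {L : FirstOrder.Language.{v, w}} (A : Type*) (B : Type*)
    [L.Structure A] [L.Structure B] : L.Structure (A × B) where
  funMap f x := (Structure.funMap f fun i => (x i).1, Structure.funMap f fun i => (x i).2)
  RelMap r x := Structure.RelMap r (fun i => (x i).1) ∧ Structure.RelMap r fun i => (x i).2

/-- An algebra is directly indecomposable if it is nontrivial and not isomorphic to
a direct product of two nontrivial algebras. -/
def DirectlyIndecomposable (L : FirstOrder.Language.{v, w}) (A : Type u)
    [L.Structure A] : Prop :=
  Nontrivial A ∧
    ¬∃ (B : Type u) (C : Type u) (_ : L.Structure B) (_ : L.Structure C),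
      Nontrivial B ∧ Nontrivial C ∧ Nonempty (A ≃[L] B × C)

end Paper

namespace Paper

/-- The function symbols `{+, *, 0, 1}` of the language of `V_L`. -/
inductive LFn : ℕ → Type
  | add : LFn 2
  | mul : LFn 2
  | zero : LFn 0
  | one : LFn 0

/-- The language `{+, *, 0, 1}`. -/
def LL : FirstOrder.Language := ⟨LFn, fun _ => Empty⟩

/-- The variable `x`. -/
def xT : LL.Term (Empty ⊕ Fin 1) := Term.var (Sum.inr 0)

/-- The closed term `0`. -/
def zeroT {α : Type*} : LL.Term α := Term.func LFn.zero ![]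

/-- The closed term `1`. -/
def oneT {α : Type*} : LL.Term α := Term.func LFn.one ![]

/-- `t + u`. -/
def addT {α : Type*} (t u : LL.Term α) : LL.Term α := Term.func LFn.add ![t, u]

/-- `t * u`. -/
def mulT {α : Type*} (t u : LL.Term α) : LL.Term α := Term.func LFn.mul ![t, u]

/-- The theory of `V_L`: `x + 0 = x`, `x + 1 = x * 1`, `x * 0 = 0`. -/
def TL : LL.Theory :=
  {((addT xT zeroT).bdEqual xT).alls,
   ((addT xT oneT).bdEqual (mulT xT oneT)).alls,
   ((mulT xT zeroT).bdEqual zeroT).alls}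

end Paper

namespace Paper

open Filter Function Structure

/-- Two rows `Option (Option _)`: in each row `none` is the base point and `some none` the unit,
with `0 = inl none` and `1 = inr (some none)`. Adding a unit collapses an element to the base point
of its row, any other addition is trivial, and `x * y` is the base point of the row
`row x ∧ row y`. -/
abbrev Gadget (α β : Type*) : Type _ := Option (Option α) ⊕ Option (Option β)

namespace Gadget

variable {α β α' β' : Type*}

def base : Gadget α β → Gadget α β
  | .inl _ => .inl none
  | .inr _ => .inr none

def add (x : Gadget α β) : Gadget α β → Gadget α β
  | .inl (some none) | .inr (some none) => base x
  | _ => x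

def mul (x : Gadget α β) : Gadget α β → Gadget α β
  | .inl _ => .inl none
  | .inr _ => base x

instance instStructure : LL.Structure (Gadget α β) where
  funMap {n} f v :=
    match n, f, v with
    | _, .add, v => add (v 0) (v 1)
    | _, .mul, v => mul (v 0) (v 1)
    | _, .zero, _ => .inl none
    | _, .one, _ => .inr (some none)
  RelMap r := Empty.elim r

theorem model_TL : Gadget α β ⊨ TL := by
  simp only [Theory.model_iff, TL, Set.mem_insert_iff, Set.mem_singleton_iff]
  rintro φ (rfl | rfl | rfl) <;> exact fun _ => rfl

def map (f : α → α') (g : β → β') : Gadget α β → Gadget α' β' :=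
  Sum.map (Option.map (Option.map f)) (Option.map (Option.map g))

theorem map_surjective {f : α → α'} {g : β → β'} (hf : Surjective f) (hg : Surjective g) :
    Surjective (map f g) :=
  LeftInverse.surjective (g := map (surjInv hf) (surjInv hg)) <| by
    rintro ((_ | _ | a) | (_ | _ | b)) <;>
      simp only [map, Sum.map_inl, Sum.map_inr, Option.map_some, Option.map_none, surjInv_eq]

def mapHom (f : α → α') (g : β → β') : Gadget α β →[LL] Gadget α' β' where
  toFun := map f g
  map_fun' {n} F v := by
    cases F
    case add | mul =>
      obtain ⟨x, y, rfl⟩ : ∃ x y, v = ![x, y] := ⟨v 0, v 1, by ext i; fin_cases i <;> rfl⟩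
      rcases x with (_ | _ | _) | (_ | _ | _) <;> rcases y with (_ | _ | _) | (_ | _ | _) <;> rfl
    all_goals rfl
  map_rel' r := Empty.elim r

end Gadget

instance instStructureBool : LL.Structure Bool where
  funMap {n} f v :=
    match n, f, v with
    | _, .add, v => v 0
    | _, .mul, v => v 0 && v 1
    | _, .zero, _ => false
    | _, .one, _ => true
  RelMap r := Empty.elim r

instance instStructureOptionOption {γ : Type*} : LL.Structure (Option (Option γ)) where
  funMap {n} f v :=
    match n, f, v with
    | _, .add, v => match v 1 with
      | some none => none
      | _ => v 0
    | _, .mul, _ => none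
    | _, .zero, _ => none
    | _, .one, _ => some none
  RelMap r := Empty.elim r

def Gadget.equivProd {α β : Type*} (e : β ≃ α) : Gadget α β ≃[LL] Bool × Option (Option α) where
  toEquiv := (Equiv.sumCongr (Equiv.refl _) e.optionCongr.optionCongr).trans
    (Equiv.boolProdEquivSum _).symm
  map_fun' {n} F v := by
    cases F
    case add | mul =>
      obtain ⟨x, y, rfl⟩ : ∃ x y, v = ![x, y] := ⟨v 0, v 1, by ext i; fin_cases i <;> rfl⟩
      rcases x with (_ | _ | _) | (_ | _ | _) <;> rcases y with (_ | _ | _) | (_ | _ | _) <;> rfl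
    all_goals rfl
  map_rel' r := Empty.elim r

section Ultraproduct

variable {ι : Type*} (U : Ultrafilter ι) {X Y : ι → Type*}

theorem Product.coe_eq_coe {l : Filter ι} {x y : ∀ i, X i} :
    (x : l.Product X) = (y : l.Product X) ↔ ∀ᶠ i in l, x i = y i :=
  Quotient.eq''

noncomputable def Product.optionEquiv [∀ i, Nonempty (X i)] :
    Option ((U : Filter ι).Product X) ≃ (U : Filter ι).Product fun i => Option (X i) := by
  refine Equiv.ofBijective (Option.elim' (fun _ => none : ∀ i, Option (X i))
    (Quotient.map' (fun x i => some (x i)) fun _ _ h => h.mono fun _ => congrArg some)) ⟨?_, ?_⟩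
  · rintro (_ | ⟨⟨x⟩⟩) (_ | ⟨⟨y⟩⟩) h <;> replace h := Product.coe_eq_coe.1 h
    · rfl
    · obtain ⟨_, ⟨⟩⟩ := h.exists
    · obtain ⟨_, ⟨⟩⟩ := h.exists
    · exact congrArg some (Quotient.sound (h.mono fun _ => Option.some_inj.1))
  · rintro ⟨z⟩
    rcases U.em (fun i => z i = none) with hnone | hsome
    · exact ⟨none, Quotient.sound (hnone.mono fun _ hi => hi.symm)⟩
    · refine ⟨some ((fun i => (z i).getD (Classical.arbitrary _) : ∀ i, X i) : _), ?_⟩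
      exact Quotient.sound (hsome.mono fun i hi => Option.getD_of_ne_none hi _)

noncomputable def Product.sumEquiv [∀ i, Nonempty (X i)] [∀ i, Nonempty (Y i)] :
    (U : Filter ι).Product X ⊕ (U : Filter ι).Product Y ≃
      (U : Filter ι).Product fun i => X i ⊕ Y i := by
  refine Equiv.ofBijective
    (Sum.elim (Quotient.map' (fun x i => .inl (x i)) fun _ _ h => h.mono fun _ => congrArg _)
      (Quotient.map' (fun y i => .inr (y i)) fun _ _ h => h.mono fun _ => congrArg _)) ⟨?_, ?_⟩
  · rintro (⟨⟨x⟩⟩ | ⟨⟨x⟩⟩) (⟨⟨y⟩⟩ | ⟨⟨y⟩⟩) h <;> replace h := Product.coe_eq_coe.1 h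
    · exact congrArg _ (Quotient.sound (h.mono fun _ hi => Sum.inl_injective hi))
    · obtain ⟨_, ⟨⟩⟩ := h.exists
    · obtain ⟨_, ⟨⟩⟩ := h.exists
    · exact congrArg _ (Quotient.sound (h.mono fun _ hi => Sum.inr_injective hi))
  · rintro ⟨z⟩
    rcases U.em (fun i => (z i).isLeft) with hleft | hright
    · refine ⟨.inl ((fun i => (z i).elim id fun _ => Classical.arbitrary _ : ∀ i, X i) : _), ?_⟩
      refine Quotient.sound (hleft.mono fun i hi => ?_)
      obtain ⟨a, ha⟩ := Sum.isLeft_iff.1 hi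
      simp only [ha, Sum.elim_inl, id]
    · refine ⟨.inr ((fun i => (z i).elim (fun _ => Classical.arbitrary _) id : ∀ i, Y i) : _), ?_⟩
      refine Quotient.sound (hright.mono fun i hi => ?_)
      obtain ⟨b, hb⟩ := Sum.isRight_iff.1 (Sum.not_isLeft.1 hi)
      simp only [hb, Sum.elim_inr, id]

def Product.diagonalHom {L : Language} {N : Type*} [L.Structure N] {M : ι → Type*}
    [∀ i, L.Structure (M i)] (π : ∀ i, N →[L] M i) : N →[L] (U : Filter ι).Product M where
  toFun x := ((fun i => π i x : ∀ i, M i) : _)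
  map_fun' f v := by
    simp only [HomClass.map_fun]
    exact (Ultraproduct.funMap_cast f fun j i => π i (v j)).symm
  map_rel' r v h := (relMap_quotient_mk' (s := (U : Filter ι).productSetoid M) r
    fun j i => π i (v j)).2 (Eventually.of_forall fun i => (π i).map_rel r v h)

end Ultraproduct

theorem map_fun_of_comp_eq {L : Language} {X Y Z : Type*} [L.Structure X] [L.Structure Y]
    [L.Structure Z] (q : X →[L] Y) (hq : Surjective q) (d : X →[L] Z) {φ : Y → Z}
    (h : ∀ x, φ (q x) = d x) {n : ℕ} (f : L.Functions n) (v : Fin n → Y) :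
    φ (funMap f v) = funMap f (φ ∘ v) := by
  obtain ⟨w, rfl⟩ : ∃ w, q ∘ w = v := ⟨surjInv hq ∘ v, funext fun j => surjInv_eq hq _⟩
  rw [← q.map_fun, h, d.map_fun]
  exact congrArg _ (funext fun j => (h (w j)).symm)

namespace Gadget

variable {ι : Type*} (U : Ultrafilter ι) (α β : ι → Type*) [∀ i, Nonempty (α i)]
  [∀ i, Nonempty (β i)]

/-- Composed with the surjection `Gadget (∀ i, α i) (∀ i, β i) → Gadget (∏ α / U) (∏ β / U)`, this
equivalence is the diagonal of the coordinate maps, which makes it a homomorphism. -/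
noncomputable def ultraproductEquiv :
    Gadget ((U : Filter ι).Product α) ((U : Filter ι).Product β) ≃[LL]
      (U : Filter ι).Product fun i => Gadget (α i) (β i) where
  toEquiv := (Equiv.sumCongr
    ((Product.optionEquiv U).optionCongr.trans (Product.optionEquiv U))
    ((Product.optionEquiv U).optionCongr.trans (Product.optionEquiv U))).trans
      (Product.sumEquiv U)
  map_fun' :=
    map_fun_of_comp_eq (mapHom (fun a : ∀ i, α i => (a : (U : Filter ι).Product α))
      (fun b : ∀ i, β i => (b : (U : Filter ι).Product β)))
      (map_surjective Quotient.mk''_surjective Quotient.mk''_surjective)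
      (Product.diagonalHom U fun i => mapHom (fun a : ∀ i, α i => a i) (fun b : ∀ i, β i => b i))
      (by rintro ((_ | _ | _) | (_ | _ | _)) <;> rfl)
  map_rel' r := Empty.elim r

end Gadget

theorem directlyIndecomposable_of_prime_card {L : Language} {A : Type u} [L.Structure A]
    (hA : (Nat.card A).Prime) : DirectlyIndecomposable L A := by
  have : Finite A := Nat.finite_of_card_ne_zero hA.ne_zero
  refine ⟨Finite.one_lt_card_iff_nontrivial.1 hA.one_lt, ?_⟩
  rintro ⟨B, C, _, _, hB, hC, ⟨e⟩⟩
  rw [Nat.card_congr e.toEquiv, Nat.card_prod] at hA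
  rcases Nat.prime_mul_iff.1 hA with ⟨-, hC1⟩ | ⟨-, hB1⟩
  · exact not_subsingleton C (Nat.card_eq_one_iff_unique.1 hC1).1
  · exact not_subsingleton B (Nat.card_eq_one_iff_unique.1 hB1).1

theorem infinite_setOf_prime_two_mul_add_seven : {n : ℕ | (2 * n + 7).Prime}.Infinite := by
  refine fun hfin => Nat.infinite_setOfPred_prime (((hfin.image fun n => 2 * n + 7).union
    (Set.finite_Iio 7)).subset fun p hp => ?_)
  rcases lt_or_ge p 7 with h7 | h7
  · exact .inr h7
  · obtain ⟨k, rfl⟩ := hp.odd_of_ne_two (by omega)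
    have hk : 2 * (k - 3) + 7 = 2 * k + 1 := by omega
    exact .inl ⟨k - 3, by rwa [Set.mem_ofPred_eq, hk], hk⟩

theorem infinite_product_fin_succ (U : Ultrafilter ℕ) (hU : (U : Filter ℕ) ≤ cofinite) :
    Infinite ((U : Filter ℕ).Product fun n => Fin (n + 1)) := by
  refine Infinite.of_injective
    (fun k => ((fun n => ⟨min k n, Nat.lt_succ_of_le (min_le_right _ _)⟩ : ∀ n, Fin (n + 1)) : _))
    fun k k' h => ?_
  obtain ⟨n, hn, hk⟩ := ((Product.coe_eq_coe.1 h).and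
    (hU (Nat.cofinite_eq_atTop ▸ eventually_ge_atTop (max k k')))).exists
  simpa [Fin.ext_iff, min_eq_left (le_of_max_le_left hk), min_eq_left (le_of_max_le_right hk)]
    using hn

theorem exists_ultrafilter_le_cofinite_of_infinite {α : Type*} {s : Set α} (hs : s.Infinite) :
    ∃ U : Ultrafilter α, (U : Filter α) ≤ cofinite ∧ s ∈ U := by
  have := hs.cofinite_inf_principal_neBot
  obtain ⟨U, hU⟩ := Ultrafilter.exists_le (cofinite ⊓ 𝓟 s)
  exact ⟨U, hU.trans inf_le_left, le_principal_iff.1 (hU.trans inf_le_right)⟩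

abbrev gadgetFamily (n : ℕ) : Type := Gadget (Fin (n + 1)) (Option (Fin (n + 1)))

theorem card_gadgetFamily (n : ℕ) : Nat.card (gadgetFamily n) = 2 * n + 7 := by
  simp only [Nat.card_eq_fintype_card, Fintype.card_sum, Fintype.card_option, Fintype.card_fin]
  ring

theorem not_directlyIndecomposable_ultraproduct_gadgetFamily (U : Ultrafilter ℕ)
    (hU : (U : Filter ℕ) ≤ cofinite) :
    ¬DirectlyIndecomposable LL ((U : Filter ℕ).Product gadgetFamily) := by
  have := infinite_product_fin_succ U hU
  have hcloud : Option ((U : Filter ℕ).Product fun n => Fin (n + 1)) ≃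
      (U : Filter ℕ).Product fun n => Fin (n + 1) :=
    (Cardinal.eq.1 (by rw [Cardinal.mk_option, Cardinal.add_one_eq (Cardinal.aleph0_le_mk _)])).some
  rintro ⟨-, hDI⟩
  exact hDI ⟨Bool, _, _, _, inferInstance, inferInstance,
    ⟨(Gadget.equivProd ((Product.optionEquiv U).symm.trans hcloud)).comp
      (Gadget.ultraproductEquiv U (fun n => Fin (n + 1)) fun n => Option (Fin (n + 1))).symm⟩⟩

end Paper

/-- **Theorem 6.1.** The class of directly indecomposable members of `V_L` is
not axiomatizable by any set of first-order sentences. -/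
theorem VL_DI_not_axiomatizable :
    ¬∃ S : Paper.LL.Theory,
      ∀ (A : Type) [Paper.LL.Structure A], Nonempty A →
        ((A ⊨ Paper.TL ∧ Paper.DirectlyIndecomposable Paper.LL A) ↔ A ⊨ S) := by
  rintro ⟨S, hS⟩
  obtain ⟨U, hU, hprime⟩ :=
    Paper.exists_ultrafilter_le_cofinite_of_infinite Paper.infinite_setOf_prime_two_mul_add_seven
  have hmodel : ∀ n, (2 * n + 7).Prime → Paper.gadgetFamily n ⊨ S := fun n hn =>
    (hS _ ⟨.inl none⟩).1 ⟨Paper.Gadget.model_TL,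
      Paper.directlyIndecomposable_of_prime_card (Paper.card_gadgetFamily n ▸ hn)⟩
  have hUmodel : (U : Filter ℕ).Product Paper.gadgetFamily ⊨ S :=
    (Language.Theory.model_iff _).2 fun φ hφ => (Language.Ultraproduct.sentence_realize φ).2 <|
      Filter.mem_of_superset hprime fun n hn => (hmodel n hn).realize_of_mem φ hφ
  exact Paper.not_directlyIndecomposable_ultraproduct_gadgetFamily U hU
    ((hS _ inferInstance).2 hUmodel).2
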